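/- Let G=(V,E) be a finite connected simple graph with girth at least 6, and let ω and ω' be two weights on G such that κ_e(ω) = κ_e(ω') for every edge e∈E. Then there exists a constant c>0 such that ω_e = c·ω'_e for every e∈E. In particular, the map sending a weight ω with Σ_{e∈E} ω_e = 1 to its curvature vector (κ_e(ω))_{e∈E} is injective. -/
import Mathlib


open Finset

variable {V : Type*} [Fintype V] [DecidableEq V]

/-- The weighted vertex measure `m(x) = Σ_{y ∼ x} ω_{xy}`. -/
noncomputable def vm (G : SimpleGraph V) [DecidableRel G.Adj] (w : Sym2 V → ℝ) (x : V) : ℝ :=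
  ∑ y ∈ G.neighborFinset x, w s(x, y)

/-- The Lin–Lu–Yau curvature of an edge `e = {x,y}` on a graph of girth ≥ 6, given by the
explicit formula `κ_e(ω) = 2·ω_e·(1/m(x) + 1/m(y)) − 2`. -/
noncomputable def edgeKappa (G : SimpleGraph V) [DecidableRel G.Adj] (w : Sym2 V → ℝ) :
    Sym2 V → ℝ :=
  Sym2.lift ⟨fun x y => 2 * w s(x, y) * (1 / vm G w x + 1 / vm G w y) - 2, by
    intro x y
    dsimp only
    rw [Sym2.eq_swap]
    ring⟩

set_option linter.unusedVariables false
set_option linter.unusedSectionVars false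

lemma edge_mem {G : SimpleGraph V} [DecidableRel G.Adj] {x z : V} (h : G.Adj x z) :
    s(x, z) ∈ G.edgeFinset := by
  rw [SimpleGraph.mem_edgeFinset, SimpleGraph.mem_edgeSet]; exact h

lemma vm_pos {G : SimpleGraph V} [DecidableRel G.Adj] {w : Sym2 V → ℝ}
    (hw : ∀ e ∈ G.edgeFinset, 0 < w e) {x y : V} (hxy : G.Adj x y) : 0 < vm G w x := by
  apply Finset.sum_pos
  · intro z hz
    exact hw _ (edge_mem ((G.mem_neighborFinset x z).mp hz))
  · exact ⟨y, (G.mem_neighborFinset x y).mpr hxy⟩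

lemma vm_le {G : SimpleGraph V} [DecidableRel G.Adj] {w w' : Sym2 V → ℝ} {c : ℝ}
    (hc : ∀ e ∈ G.edgeFinset, w e ≤ c * w' e) (x : V) :
    vm G w x ≤ c * vm G w' x := by
  rw [vm, vm, Finset.mul_sum]
  exact Finset.sum_le_sum fun z hz =>
    hc _ (edge_mem ((G.mem_neighborFinset x z).mp hz))

/-- Key step: if the maximal ratio `c` is attained at the edge `{x,y}`, then it is attained
at every edge incident to `x`. -/
lemma key {G : SimpleGraph V} [DecidableRel G.Adj] {w w' : Sym2 V → ℝ}
    (hw : ∀ e ∈ G.edgeFinset, 0 < w e) (hw' : ∀ e ∈ G.edgeFinset, 0 < w' e)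
    {c : ℝ} (hc0 : 0 < c) (hc : ∀ e ∈ G.edgeFinset, w e ≤ c * w' e)
    {x y : V} (hxy : G.Adj x y)
    (hkxy : edgeKappa G w s(x, y) = edgeKappa G w' s(x, y))
    (heq : w s(x, y) = c * w' s(x, y)) :
    ∀ z ∈ G.neighborFinset x, w s(x, z) = c * w' s(x, z) := by
  have hmx : 0 < vm G w x := vm_pos hw hxy
  have hmy : 0 < vm G w y := vm_pos hw hxy.symm
  have hmx' : 0 < vm G w' x := vm_pos hw' hxy
  have hmy' : 0 < vm G w' y := vm_pos hw' hxy.symm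
  have hlx : vm G w x ≤ c * vm G w' x := vm_le hc x
  have hly : vm G w y ≤ c * vm G w' y := vm_le hc y
  have hwe' : 0 < w' s(x, y) := hw' _ (edge_mem hxy)
  -- curvature equality unfolded
  have hk2 : w s(x, y) * (1 / vm G w x + 1 / vm G w y)
      = w' s(x, y) * (1 / vm G w' x + 1 / vm G w' y) := by
    have := hkxy
    simp only [edgeKappa, Sym2.lift_mk] at this
    linarith
  have hk3 : c * (1 / vm G w x + 1 / vm G w y) = 1 / vm G w' x + 1 / vm G w' y := by
    rw [heq, mul_assoc] at hk2
    field_simp at hk2 ⊢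
    nlinarith [hk2]
  -- termwise inequalities
  have tx : 1 / vm G w' x ≤ c * (1 / vm G w x) := by
    rw [mul_one_div, div_le_div_iff₀ hmx' hmx]
    nlinarith
  have ty : 1 / vm G w' y ≤ c * (1 / vm G w y) := by
    rw [mul_one_div, div_le_div_iff₀ hmy' hmy]
    nlinarith
  -- hence equality at x
  have hx_eq : c * (1 / vm G w x) = 1 / vm G w' x := by linarith
  have hmeq : vm G w x = c * vm G w' x := by
    rw [mul_one_div, div_eq_div_iff hmx.ne' hmx'.ne'] at hx_eq
    nlinarith
  -- equality in the sum forces termwise equality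
  have hsum : ∑ z ∈ G.neighborFinset x, (c * w' s(x, z) - w s(x, z)) = 0 := by
    rw [Finset.sum_sub_distrib, ← Finset.mul_sum]
    change c * vm G w' x - vm G w x = 0
    linarith
  intro z hz
  have := (Finset.sum_eq_zero_iff_of_nonneg (fun z hz => by
    have := hc _ (edge_mem ((G.mem_neighborFinset x z).mp hz)); linarith)).mp hsum z hz
  linarith

/-- On a graph with girth at least 6, the curvature determines the weight up to a positive
scalar; in particular, on weights normalized by `Σ_e ω_e = 1`, the weight-to-curvature map is
injective. -/
theorem kappa_determines_weight (G : SimpleGraph V) [DecidableRel G.Adj]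
    (hconn : G.Connected) (hgirth : 6 ≤ G.egirth)
    (w w' : Sym2 V → ℝ) (hw : ∀ e ∈ G.edgeFinset, 0 < w e)
    (hw' : ∀ e ∈ G.edgeFinset, 0 < w' e)
    (hk : ∀ e ∈ G.edgeFinset, edgeKappa G w e = edgeKappa G w' e) :
    (∃ c : ℝ, 0 < c ∧ ∀ e ∈ G.edgeFinset, w e = c * w' e) ∧
    ((∑ e ∈ G.edgeFinset, w e = 1) → (∑ e ∈ G.edgeFinset, w' e = 1) →
      ∀ e ∈ G.edgeFinset, w e = w' e) := by
  have main : ∃ c : ℝ, 0 < c ∧ ∀ e ∈ G.edgeFinset, w e = c * w' e := by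
    rcases Finset.eq_empty_or_nonempty G.edgeFinset with hE | hE
    · exact ⟨1, one_pos, fun e he => by simp [hE] at he⟩
    · -- max ratio
      obtain ⟨e0, he0, hmax⟩ := G.edgeFinset.exists_max_image (fun e => w e / w' e) hE
      set c := w e0 / w' e0 with hcdef
      have hc0 : 0 < c := div_pos (hw _ he0) (hw' _ he0)
      have hc : ∀ e ∈ G.edgeFinset, w e ≤ c * w' e := fun e he => by
        have h1 := hmax e he
        have h2 := hw' _ he
        rw [div_le_div_iff₀ h2 (hw' _ he0)] at h1
        · calc w e = (w e / w' e) * w' e := by field_simp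
            _ ≤ c * w' e := by
              apply mul_le_mul_of_nonneg_right _ h2.le
              exact hmax e he
      -- endpoint of max edge
      induction e0 using Sym2.ind with
      | _ x0 y0 =>
        have hadj0 : G.Adj x0 y0 := by rwa [SimpleGraph.mem_edgeFinset, SimpleGraph.mem_edgeSet] at he0
        have heq0 : w s(x0, y0) = c * w' s(x0, y0) := by
          rw [hcdef, div_mul_cancel₀ _ (hw' _ he0).ne']
        -- vertex property
        set Q : V → Prop := fun v => ∀ z ∈ G.neighborFinset v, w s(v, z) = c * w' s(v, z) with hQ
        have hQx0 : Q x0 := key hw hw' hc0 hc hadj0 (hk _ he0) heq0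
        have step : ∀ a b : V, G.Adj a b → Q a → Q b := by
          intro a b hab hQa
          have hab_eq : w s(a, b) = c * w' s(a, b) :=
            hQa b ((G.mem_neighborFinset a b).mpr hab)
          have : w s(b, a) = c * w' s(b, a) := by rwa [Sym2.eq_swap]
          exact key hw hw' hc0 hc hab.symm (hk _ (edge_mem hab.symm)) this
        have walkprop : ∀ {u v : V} (_ : G.Walk u v), Q u → Q v := by
          intro u v p
          induction p with
          | nil => exact id
          | cons h _ ih => intro hu; exact ih (step _ _ h hu)
        have allQ : ∀ v, Q v := fun v => walkprop (hconn.preconnected x0 v).some hQx0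
        refine ⟨c, hc0, fun e he => ?_⟩
        induction e using Sym2.ind with
        | _ a b =>
          have hab : G.Adj a b := by rwa [SimpleGraph.mem_edgeFinset, SimpleGraph.mem_edgeSet] at he
          exact allQ a b ((G.mem_neighborFinset a b).mpr hab)
  refine ⟨main, fun hs hs' e he => ?_⟩
  obtain ⟨c, hc0, hce⟩ := main
  have : ∑ e ∈ G.edgeFinset, w e = c * ∑ e ∈ G.edgeFinset, w' e := by
    rw [Finset.mul_sum]; exact Finset.sum_congr rfl hce
  rw [hs, hs', mul_one] at this
  rw [hce e he, ← this, one_mul]
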